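/- Let Z_1,…,Z_k ∈ ℝ^d satisfy the r*-spread condition around μ for some r* > 0, let x ∈ ℝ^d with ‖x − μ‖ ≥ 20·r*, and suppose y ∈ ℝ^d is a unit vector with ⟨y, (μ − x)/‖μ − x‖⟩ ≥ 1/15. Then the number of indices i ∈ {1,…,k} with ⟨Z_i − x, y⟩ > 0 is at least 0.95·k. -/

import Mathlib

/-! If `⟨Z i − x, y⟩ ≤ 0` then `⟨Z i − μ, −y⟩ ≥ ⟨y, μ − x⟩ ≥ ‖μ − x‖ / 15 ≥ 4r*/3 ≥ r*`, so every index
with `⟨Z i − x, y⟩ ≤ 0` is one of the at most `0.05·k` outliers of the spread condition in the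
direction `−y`. -/

noncomputable section

/-- `Z₁,…,Z_k` satisfy the `r`-spread condition around `μ`: along every unit direction `v`,
the number of indices with `⟨Z i − μ, v⟩ ≥ r` is at most `0.05·k`. -/
def SpreadCond {k D : ℕ} (Z : Fin k → EuclideanSpace ℝ (Fin D))
    (μ : EuclideanSpace ℝ (Fin D)) (r : ℝ) : Prop :=
  ∀ v : EuclideanSpace ℝ (Fin D), ‖v‖ = 1 →
    (({i : Fin k | r ≤ (inner ℝ (Z i - μ) v : ℝ)}).ncard : ℝ) ≤ 0.05 * k

lemma Set.sub_ncard_compl_le_ncard {α : Type*} [Finite α] {A : Set α} {c : ℝ}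
    (h : (Aᶜ.ncard : ℝ) ≤ c) : (Nat.card α : ℝ) - c ≤ A.ncard := by
  have hsum : ((A.ncard + Aᶜ.ncard : ℕ) : ℝ) = Nat.card α := by
    rw [Set.ncard_add_ncard_compl]
  push_cast at hsum
  linarith

section InnerProductSpace

variable {E : Type*} [NormedAddCommGroup E] [InnerProductSpace ℝ E]

lemma mul_norm_le_inner_of_le_inner_normalize {c : ℝ} {y u : E}
    (h : c ≤ inner ℝ y (‖u‖⁻¹ • u)) : c * ‖u‖ ≤ inner ℝ y u := by
  rcases eq_or_ne u 0 with rfl | hu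
  · simp
  rw [real_inner_smul_right] at h
  have hpos : 0 < ‖u‖ := norm_pos_iff.mpr hu
  rwa [le_inv_mul_iff₀ hpos, mul_comm] at h

lemma inner_le_inner_sub_neg_of_inner_nonpos {z x μ y : E} (h : inner ℝ (z - x) y ≤ (0 : ℝ)) :
    inner ℝ y (μ - x) ≤ (inner ℝ (z - μ) (-y) : ℝ) := by
  have hdecomp : z - μ = (z - x) - (μ - x) := by abel
  rw [inner_neg_right, hdecomp, inner_sub_left, real_inner_comm (μ - x)]
  linarith

end InnerProductSpace

lemma SpreadCond.le_ncard_inner_pos {k D : ℕ} {Z : Fin k → EuclideanSpace ℝ (Fin D)}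
    {μ x y : EuclideanSpace ℝ (Fin D)} {r : ℝ} (hspread : SpreadCond Z μ r) (hy : ‖y‖ = 1)
    (hr : r ≤ inner ℝ y (μ - x)) :
    (0.95 : ℝ) * k ≤ ({i : Fin k | 0 < (inner ℝ (Z i - x) y : ℝ)}).ncard := by
  have houtliers : {i : Fin k | 0 < (inner ℝ (Z i - x) y : ℝ)}ᶜ ⊆
      {i : Fin k | r ≤ (inner ℝ (Z i - μ) (-y) : ℝ)} := fun i hi =>
    hr.trans (inner_le_inner_sub_neg_of_inner_nonpos (not_lt.mp hi))
  have hcompl := (Nat.cast_le.mpr (Set.ncard_le_ncard houtliers)).trans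
    (hspread (-y) (by rw [norm_neg, hy]))
  have := Set.sub_ncard_compl_le_ncard hcompl
  rw [Nat.card_eq_fintype_card, Fintype.card_fin] at this
  linarith

theorem stmt15 {k D : ℕ} (Z : Fin k → EuclideanSpace ℝ (Fin D))
    (μ : EuclideanSpace ℝ (Fin D)) (rstar : ℝ) (hrstar : 0 < rstar)
    (hspread : SpreadCond Z μ rstar)
    (x : EuclideanSpace ℝ (Fin D)) (hx : 20 * rstar ≤ ‖x - μ‖)
    (y : EuclideanSpace ℝ (Fin D)) (hy : ‖y‖ = 1)
    (halign : (1 / 15 : ℝ) ≤ (inner ℝ y (‖μ - x‖⁻¹ • (μ - x)) : ℝ)) :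
    (0.95 : ℝ) * k ≤
      (({i : Fin k | 0 < (inner ℝ (Z i - x) y : ℝ)}).ncard : ℝ) := by
  have hscaled := mul_norm_le_inner_of_le_inner_normalize halign
  rw [norm_sub_rev] at hscaled
  exact hspread.le_ncard_inner_pos hy (by linarith)
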